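/- arXiv:1902.07405 — 7 statements merged into one kernel-verified Lean document; each statement's English description precedes it below -/
import Mathlib

section
/- Let W = ⊕_{i=1}^m I[b_i, d_i] be a representation of A_w where the collection {I[b_i,d_i]} is vertical (all pairs (b_i,d_i) distinct and b_i + d_i = 2μ for a common μ). Then every endomorphism φ of W is diagonal with respect to this decomposition: the component of φ from the i-th summand to the j-th summand is zero whenever i ≠ j, and the component from the i-th summand to itself is a scalar multiple of the identity. -/
open scoped Classical

/-- A persistence module over a poset `P`: a functor `P → vect_K`. -/
structure PersMod (K : Type) [Field K] (P : Type) [Preorder P] : Type 1 where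
  V : P → Type
  [acg : ∀ p, AddCommGroup (V p)]
  [mod : ∀ p, Module K (V p)]
  map : ∀ {p q : P}, p ≤ q → (V p →ₗ[K] V q)
  map_id : ∀ p : P, map (le_refl p) = LinearMap.id
  map_comp : ∀ {p q r : P} (hpq : p ≤ q) (hqr : q ≤ r),
    map (le_trans hpq hqr) = (map hqr).comp (map hpq)

attribute [instance] PersMod.acg PersMod.mod

variable {K : Type} [Field K] {P : Type} [Preorder P]

/-- The space of morphisms (natural transformations) between two persistence modules,
as a submodule of the product of the spaces of linear maps. -/
def HomSpace (M N : PersMod K P) : Submodule K (∀ p, M.V p →ₗ[K] N.V p) where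
  carrier := {f | ∀ (p q : P) (h : p ≤ q), (N.map h).comp (f p) = (f q).comp (M.map h)}
  add_mem' := by
    intro f g hf hg p q h
    simp only [Pi.add_apply, LinearMap.comp_add, LinearMap.add_comp, hf p q h, hg p q h]
  zero_mem' := by intro p q h; simp
  smul_mem' := by
    intro c f hf p q h
    simp only [Pi.smul_apply, LinearMap.comp_smul, LinearMap.smul_comp, hf p q h]

/-- Helper: an element of the zero part of an interval module is zero. -/
lemma seg_val_zero {c : Prop} {inst : Decidable c} (h : ¬c)
    (x : ↥(@ite _ c inst (⊤ : Submodule K K) ⊥)) :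
    (x : K) = 0 := by
  obtain ⟨v, hv⟩ := x
  rw [if_neg h] at hv
  exact (Submodule.mem_bot K).mp hv

/-- The interval (segment / rectangle) module `I[a,b]`: value `K` on points `x` with
`a ≤ x ≤ b`, zero elsewhere, identity internal maps. -/
noncomputable def seg (a b : P) : PersMod K P where
  V x := ↥(if a ≤ x ∧ x ≤ b then (⊤ : Submodule K K) else ⊥)
  map {x y} hxy :=
    { toFun := fun c => ⟨if a ≤ x ∧ y ≤ b then (c : K) else 0, by
        by_cases hc : a ≤ x ∧ y ≤ b
        · rw [if_pos hc, if_pos ⟨le_trans hc.1 hxy, hc.2⟩]; trivial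
        · rw [if_neg hc]; exact Submodule.zero_mem _⟩
      map_add' := by
        intro c d; apply Subtype.ext
        by_cases hc : a ≤ x ∧ y ≤ b <;> simp [hc]
      map_smul' := by
        intro r c; apply Subtype.ext
        by_cases hc : a ≤ x ∧ y ≤ b <;> simp [hc] }
  map_id := by
    intro p
    apply LinearMap.ext; intro c
    apply Subtype.ext
    show (if a ≤ p ∧ p ≤ b then (c : K) else 0) = (c : K)
    by_cases hc : a ≤ p ∧ p ≤ b
    · rw [if_pos hc]
    · rw [seg_val_zero hc c, ite_self]
  map_comp := by
    intro p q r hpq hqr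
    apply LinearMap.ext; intro c
    apply Subtype.ext
    show (if a ≤ p ∧ r ≤ b then (c : K) else 0)
      = (if a ≤ q ∧ r ≤ b then (if a ≤ p ∧ q ≤ b then (c : K) else 0) else 0)
    by_cases h1 : a ≤ p ∧ r ≤ b
    · rw [if_pos h1,
        if_pos (show a ≤ q ∧ r ≤ b from ⟨le_trans h1.1 hpq, h1.2⟩),
        if_pos (show a ≤ p ∧ q ≤ b from ⟨h1.1, le_trans hqr h1.2⟩)]
    · rw [if_neg h1]
      by_cases h2 : a ≤ q ∧ r ≤ b
      · rw [if_pos h2, if_neg (fun h3 => h1 ⟨h3.1, h2.2⟩)]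
      · rw [if_neg h2]

/-- The canonical morphism `I[a,b] → I[c,d]`: identity on the intersection, zero elsewhere. -/
noncomputable def canonMap (a b c d : P) (p : P) :
    (seg (K := K) a b).V p →ₗ[K] (seg (K := K) c d).V p where
  toFun v := ⟨if c ≤ p ∧ p ≤ d then v.1 else 0, by
    by_cases hc : c ≤ p ∧ p ≤ d
    · simp only [if_pos hc]; trivial
    · simp only [if_neg hc]; exact Submodule.zero_mem _⟩
  map_add' := by
    intro v w; apply Subtype.ext
    show (if c ≤ p ∧ p ≤ d then (v + w).1 else 0)
      = (if c ≤ p ∧ p ≤ d then v.1 else 0) + (if c ≤ p ∧ p ≤ d then w.1 else 0)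
    by_cases hc : c ≤ p ∧ p ≤ d
    · simp only [if_pos hc]; rfl
    · simp only [if_neg hc]; simp
  map_smul' := by
    intro r v; apply Subtype.ext
    show (if c ≤ p ∧ p ≤ d then (r • v).1 else 0) = r • (if c ≤ p ∧ p ≤ d then v.1 else 0)
    by_cases hc : c ≤ p ∧ p ≤ d
    · simp only [if_pos hc]; rfl
    · simp only [if_neg hc]; simp

/-- Finite direct sum of persistence modules. -/
noncomputable def dsum {m : ℕ} (M : Fin m → PersMod K P) : PersMod K P where
  V p := ∀ i, (M i).V p
  map h := LinearMap.pi (fun i => ((M i).map h).comp (LinearMap.proj i))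
  map_id := by
    intro p
    apply LinearMap.ext; intro v; funext i
    simp [LinearMap.pi, (M i).map_id]
  map_comp := by
    intro p q r h1 h2
    apply LinearMap.ext; intro v; funext i
    simp [LinearMap.pi, (M i).map_comp h1 h2]

/-- Direct sum of two persistence modules. -/
noncomputable def dsum2 (A B : PersMod K P) : PersMod K P where
  V p := A.V p × B.V p
  map h := (A.map h).prodMap (B.map h)
  map_id := by
    intro p
    show (A.map (le_refl p)).prodMap (B.map (le_refl p)) = LinearMap.id
    rw [A.map_id, B.map_id]
    exact LinearMap.prodMap_id
  map_comp := by
    intro p q r h1 h2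
    show (A.map (le_trans h1 h2)).prodMap (B.map (le_trans h1 h2))
      = ((A.map h2).prodMap (B.map h2)).comp ((A.map h1).prodMap (B.map h1))
    rw [A.map_comp h1 h2, B.map_comp h1 h2]
    exact (LinearMap.prodMap_comp _ _ _ _).symm

/-- Isomorphism of persistence modules. -/
def PersIso (M N : PersMod K P) : Prop :=
  ∃ f ∈ HomSpace M N, ∀ p, Function.Bijective (f p)

/-- The endomorphism algebra of a persistence module. -/
def EndAlg (M : PersMod K P) : Subalgebra K (∀ p, Module.End K (M.V p)) where
  carrier := {f | ∀ (p q : P) (h : p ≤ q), (M.map h).comp (f p) = (f q).comp (M.map h)}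
  add_mem' := by
    intro f g hf hg p q h
    simp only [Pi.add_apply, LinearMap.comp_add, LinearMap.add_comp, hf p q h, hg p q h]
  mul_mem' := by
    intro f g hf hg p q h
    show (M.map h).comp ((f p).comp (g p)) = ((f q).comp (g q)).comp (M.map h)
    rw [← LinearMap.comp_assoc, hf p q h, LinearMap.comp_assoc, hg p q h,
      LinearMap.comp_assoc]
  one_mem' := by intro p q h; rfl
  algebraMap_mem' := by
    intro c p q h
    apply LinearMap.ext; intro v
    simp only [Pi.algebraMap_apply, Module.algebraMap_end_eq_smul_id, LinearMap.comp_apply,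
      LinearMap.smul_apply, LinearMap.id_apply, map_smul]

/-- Restriction of a `ℤ×ℤ`-persistence module along a monotone map (a "line"). -/
noncomputable def restrict (L : ℤ → ℤ × ℤ) (hL : Monotone L) (M : PersMod K (ℤ × ℤ)) :
    PersMod K ℤ where
  V i := M.V (L i)
  map h := M.map (hL h)
  map_id := fun p => M.map_id (L p)
  map_comp := fun h1 h2 => M.map_comp (hL h1) (hL h2)

/-!
A morphism `I[a,c] → I[a',c']` vanishes unless `a' ≤ a` and `c' ≤ c`: otherwise either every
vector of `I[a,c]` is born at `a`, where the target is zero, or every vector of `I[a,c]` dies before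
`c'`, while the target injects into its value at `c'`. Two distinct intervals with the same midpoint
violate one of these inequalities, so the off-diagonal components vanish. An endomorphism of
`I[a,c]` is determined by its value at `a`, where the space is at most one-dimensional, hence is
a scalar.
-/

lemma seg_map_coe (a c : P) {p q : P} (h : p ≤ q) (v : (seg (K := K) a c).V p) :
    ((seg (K := K) a c).map h v).1 = if a ≤ p ∧ q ≤ c then v.1 else 0 := rfl

lemma seg_eq_zero_of_not_mem {a c p : P} (hp : ¬(a ≤ p ∧ p ≤ c))
    (v : (seg (K := K) a c).V p) : v = 0 :=
  Subtype.ext (seg_val_zero hp v)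

lemma seg_exists_map_eq {a c p : P} (hap : a ≤ p) (v : (seg (K := K) a c).V p) :
    ∃ w : (seg (K := K) a c).V a, (seg (K := K) a c).map hap w = v := by
  by_cases hp : a ≤ p ∧ p ≤ c
  · let w : (seg (K := K) a c).V a :=
      ⟨v.1, by rw [if_pos ⟨le_rfl, hap.trans hp.2⟩]; trivial⟩
    exact ⟨w, Subtype.ext ((seg_map_coe a c hap w).trans (if_pos ⟨le_rfl, hp.2⟩))⟩
  · exact ⟨0, by rw [map_zero, seg_eq_zero_of_not_mem hp v]⟩

lemma seg_map_injective {a c p q : P} (hpq : p ≤ q) (hqc : q ≤ c) :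
    Function.Injective ((seg (K := K) a c).map hpq) := by
  intro v v' hvv'
  by_cases hap : a ≤ p
  · have hval := congrArg Subtype.val hvv'
    simp only [seg_map_coe, if_pos (show a ≤ p ∧ q ≤ c from ⟨hap, hqc⟩)] at hval
    exact Subtype.ext hval
  · rw [seg_eq_zero_of_not_mem (fun h => hap h.1) v, seg_eq_zero_of_not_mem (fun h => hap h.1) v']

lemma seg_map_eq_zero {a c p q : P} (hpq : p ≤ q) (hqc : ¬q ≤ c) (v : (seg (K := K) a c).V p) :
    (seg (K := K) a c).map hpq v = 0 :=
  Subtype.ext (by rw [seg_map_coe, if_neg (fun h => hqc h.2)]; rfl)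

lemma seg_V_exists_eq_smul {a c p : P} (g : Module.End K ((seg (K := K) a c).V p)) :
    ∃ k : K, ∀ v, g v = k • v := by
  by_cases hp : a ≤ p ∧ p ≤ c
  · let one : (seg (K := K) a c).V p := ⟨1, by rw [if_pos hp]; trivial⟩
    have hv : ∀ v : (seg (K := K) a c).V p, v = v.1 • one :=
      fun v => Subtype.ext (mul_one v.1).symm
    refine ⟨(g one).1, fun v => Subtype.ext ?_⟩
    have hgv : g v = v.1 • g one := by
      conv_lhs => rw [hv v]
      exact map_smul g v.1 one
    rw [hgv]
    exact mul_comm _ _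
  · exact ⟨0, fun v => by rw [seg_eq_zero_of_not_mem hp v, map_zero, smul_zero]⟩

lemma HomSpace.naturality {M N : PersMod K P} {f : ∀ p, M.V p →ₗ[K] N.V p}
    (hf : f ∈ HomSpace M N) {p q : P} (h : p ≤ q) (v : M.V p) :
    N.map h (f p v) = f q (M.map h v) :=
  LinearMap.congr_fun (hf p q h) v

section IntervalMorphisms

variable {a c a' c' : P} {f : ∀ p, (seg (K := K) a c).V p →ₗ[K] (seg (K := K) a' c').V p}

lemma seg_hom_eq_zero_of_not_le_left (hf : f ∈ HomSpace (seg a c) (seg a' c'))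
    (ha : ¬a' ≤ a) (p : P) (v : (seg (K := K) a c).V p) : f p v = 0 := by
  by_cases hap : a ≤ p
  · obtain ⟨w, rfl⟩ := seg_exists_map_eq hap v
    rw [← HomSpace.naturality hf, seg_eq_zero_of_not_mem (fun h => ha h.1) (f a w), map_zero]
  · rw [seg_eq_zero_of_not_mem (fun h => hap h.1) v, map_zero]

lemma seg_hom_eq_zero_of_not_le_right (hf : f ∈ HomSpace (seg a c) (seg a' c'))
    (hc : ¬c' ≤ c) (p : P) (v : (seg (K := K) a c).V p) : f p v = 0 := by
  by_cases hpc : p ≤ c'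
  · apply seg_map_injective (a := a') hpc le_rfl
    rw [HomSpace.naturality hf, seg_map_eq_zero hpc hc, map_zero, map_zero]
  · exact seg_eq_zero_of_not_mem (fun h => hpc h.2) _

end IntervalMorphisms

lemma seg_exists_eq_smul_of_mem_homSpace {a c : P}
    {f : ∀ p, (seg (K := K) a c).V p →ₗ[K] (seg (K := K) a c).V p}
    (hf : f ∈ HomSpace (seg a c) (seg a c)) :
    ∃ k : K, ∀ (p : P) (v : (seg (K := K) a c).V p), f p v = k • v := by
  obtain ⟨k, hk⟩ := seg_V_exists_eq_smul (f a)
  refine ⟨k, fun p v => ?_⟩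
  by_cases hap : a ≤ p
  · obtain ⟨w, rfl⟩ := seg_exists_map_eq hap v
    rw [← HomSpace.naturality hf, hk, map_smul]
  · rw [seg_eq_zero_of_not_mem (fun h => hap h.1) v, map_zero, smul_zero]

section DirectSum

variable {m n : ℕ} {M : Fin m → PersMod K P} {N : Fin n → PersMod K P}

lemma dsum_map_single {p q : P} (h : p ≤ q) (i : Fin m) (v : (M i).V p) :
    (dsum M).map h (Pi.single i v) = Pi.single i ((M i).map h v) := by
  funext k
  change (M k).map h (Pi.single (M := fun j => (M j).V p) i v k) = _
  by_cases hk : k = i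
  · subst hk
    simp
  · rw [Pi.single_eq_of_ne hk, Pi.single_eq_of_ne hk, map_zero]

noncomputable def homComponent (f : ∀ p, (dsum M).V p →ₗ[K] (dsum N).V p) (i : Fin m)
    (j : Fin n) (p : P) :
    (M i).V p →ₗ[K] (N j).V p :=
  (LinearMap.proj j).comp ((f p).comp (LinearMap.single K (fun i => (M i).V p) i))

lemma homComponent_mem {f : ∀ p, (dsum M).V p →ₗ[K] (dsum N).V p}
    (hf : f ∈ HomSpace (dsum M) (dsum N)) (i : Fin m) (j : Fin n) :
    homComponent f i j ∈ HomSpace (M i) (N j) := by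
  intro p q h
  ext v
  exact congrFun ((HomSpace.naturality hf h (Pi.single i v)).trans
    (congrArg (f q) (dsum_map_single h i v))) j

end DirectSum

theorem stmt_3_general (K : Type) [Field K] (m : ℕ) (b d : Fin m → ℤ) (mu2 : ℤ)
    (hdist : ∀ i j, (b i, d i) = (b j, d j) → i = j)
    (hvert : ∀ i, b i + d i = mu2)
    (phi : ∀ p : ℤ, (dsum (K := K) fun i => seg (b i) (d i)).V p →ₗ[K]
      (dsum (K := K) fun i => seg (b i) (d i)).V p)
    (hphi : phi ∈ HomSpace (dsum fun i => seg (b i) (d i)) (dsum fun i => seg (b i) (d i))) :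
    (∀ i j, i ≠ j → ∀ (p : ℤ) (v : (seg (K := K) (b i) (d i)).V p),
      phi p (Pi.single i v) j = 0) ∧
    (∀ i, ∃ c : K, ∀ (p : ℤ) (v : (seg (K := K) (b i) (d i)).V p),
      phi p (Pi.single i v) i = c • v) := by
  refine ⟨fun i j hij => ?_,
    fun i => seg_exists_eq_smul_of_mem_homSpace (homComponent_mem hphi i i)⟩
  have hcomp := homComponent_mem hphi i j
  have hb : b i ≠ b j := fun hb => hij (hdist i j (by rw [hb, show d i = d j by grind]))
  rcases hb.lt_or_gt with hlt | hgt
  · exact seg_hom_eq_zero_of_not_le_left hcomp hlt.not_ge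
  · exact seg_hom_eq_zero_of_not_le_right hcomp (by grind)

/-- Every endomorphism of a direct sum of a vertical collection of
intervals is diagonal, with scalar diagonal entries. -/
theorem stmt_3 (K : Type) [Field K] (w m : ℕ) (b d : Fin m → ℤ) (mu2 : ℤ)
    (hrange : ∀ i, 0 ≤ b i ∧ b i ≤ d i ∧ d i ≤ (w : ℤ) - 1)
    (hdist : ∀ i j, (b i, d i) = (b j, d j) → i = j)
    (hvert : ∀ i, b i + d i = mu2)
    (phi : ∀ p : ℤ, (dsum (K := K) fun i => seg (b i) (d i)).V p →ₗ[K]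
      (dsum (K := K) fun i => seg (b i) (d i)).V p)
    (hphi : phi ∈ HomSpace (dsum fun i => seg (b i) (d i)) (dsum fun i => seg (b i) (d i))) :
    (∀ i j, i ≠ j → ∀ (p : ℤ) (v : (seg (K := K) (b i) (d i)).V p),
      phi p (Pi.single i v) j = 0) ∧
    (∀ i, ∃ c : K, ∀ (p : ℤ) (v : (seg (K := K) (b i) (d i)).V p),
      phi p (Pi.single i v) i = c • v) :=
  stmt_3_general K m b d mu2 hdist hvert phi hphi
end

section
/- Let b_1,...,b_m and d_1,...,d_m be integers with b_i ≤ d_i for all i. Then there exist m distinct integers d'_1,...,d'_m such that d'_i ≥ d_i for all i, and (b_j + d'_j)/2 ≤ d'_i for all pairs i, j (i.e., b_j + d'_j ≤ 2 d'_i). -/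
open scoped Classical

variable {K : Type} [Field K] {P : Type} [Preorder P]

/-- Separate-and-shift: one can choose distinct `d'_i ≥ d_i` such that
`b_j + d'_j ≤ 2 d'_i` for all pairs `i, j`. -/
theorem stmt_4 (m : ℕ) (b d : Fin m → ℤ) (hbd : ∀ i, b i ≤ d i) :
    ∃ d' : Fin m → ℤ, Function.Injective d' ∧ (∀ i, d i ≤ d' i) ∧
      ∀ i j, b j + d' j ≤ 2 * d' i := by
  set M : ℤ := ↑(Finset.univ.sup fun i : Fin m => (max (d i) (b i + i)).toNat) with hM
  have hMle : ∀ i : Fin m, max (d i) (b i + i) ≤ M := by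
    intro i
    calc max (d i) (b i + i) ≤ ↑(max (d i) (b i + i)).toNat := Int.self_le_toNat _
      _ ≤ M := by
        exact_mod_cast Nat.cast_le.mpr (Finset.le_sup (f := fun i : Fin m => (max (d i) (b i + i)).toNat) (Finset.mem_univ i))
  refine ⟨fun i => M + i, ?_, ?_, ?_⟩
  · intro i j h
    simp only at h
    have : (i : ℤ) = j := by linarith
    exact Fin.ext (by exact_mod_cast this)
  · intro i
    have := le_trans (le_max_left _ _) (hMle i)
    have h2 : (0:ℤ) ≤ i := Int.ofNat_nonneg _
    show d i ≤ M + i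
    linarith [le_trans (le_max_left (d i) (b i + i)) (hMle i)]
  · intro i j
    have h1 : b j + j ≤ M := le_trans (le_max_right _ _) (hMle j)
    have h2 : (0:ℤ) ≤ i := Int.ofNat_nonneg _
    show b j + (M + j) ≤ 2 * (M + i)
    linarith
end

section
/- Let V' = ⊕_{i=1}^m I[b_i, d'_i] and V = ⊕_{i=1}^m I[b_i, d_i] be representations of A_w with d_i ≤ d'_i for all i and d_i ≤ d'_j for all pairs i,j, and let π: V' → V be the morphism whose matrix form is diagonal with (i,i)-entry the canonical projection I[b_i,d'_i] → I[b_i,d_i]. Suppose φ: V' → V' has diagonal matrix form with scalar entries c_1,...,c_m, ψ: V → V is any endomorphism, and π ∘ φ = ψ ∘ π. Then the matrix form of ψ is diagonal with the same scalar entries c_1,...,c_m. -/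
open scoped Classical

variable {K : Type} [Field K] {P : Type} [Preorder P]

/-! At every point `p` the projection `π_p : V'_p → V_p` is surjective, because `d_i ≤ d'_i`
makes each `I[b_i, d_i]_p` a quotient of `I[b_i, d'_i]_p`. Hence `ψ_p` is determined by
`ψ_p ∘ π_p = π_p ∘ φ_p = c • π_p`, which forces `ψ_p = c •` coordinatewise. -/

open Function

theorem Pi.eq_smul_of_comp_surjective {R ι : Type*} [CommSemiring R] {M N : ι → Type*}
    [∀ i, AddCommMonoid (M i)] [∀ i, Module R (M i)]
    [∀ i, AddCommMonoid (N i)] [∀ i, Module R (N i)]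
    (π : ∀ i, M i →ₗ[R] N i) (hπ : ∀ i, Surjective (π i)) (c : ι → R)
    (ψ : (∀ i, N i) → ∀ i, N i)
    (hcomm : ∀ (v : ∀ i, M i) (k : ι), π k (c k • v k) = ψ (fun j => π j (v j)) k)
    (w : ∀ i, N i) : ψ w = fun k => c k • w k := by
  obtain ⟨v, rfl⟩ := Surjective.piMap hπ w
  funext k
  exact (hcomm v k).symm.trans (map_smul _ _ _)

theorem canonMap_surjective {a b b' : P} (hb : b ≤ b') (p : P) :
    Surjective (canonMap (K := K) a b' a b p) := by
  intro v
  by_cases hp : a ≤ p ∧ p ≤ b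
  · exact ⟨⟨v.1, by rw [if_pos ⟨hp.1, hp.2.trans hb⟩]; trivial⟩, Subtype.ext (if_pos hp)⟩
  · exact ⟨0, by rw [map_zero]; exact Subtype.ext (seg_val_zero hp v).symm⟩

theorem stmt_8_general (K : Type) [Field K] (m : ℕ) (b d d' : Fin m → ℤ) (c : Fin m → K)
    (hdd' : ∀ i, d i ≤ d' i)
    (psi : ∀ p : ℤ, (dsum (K := K) fun i => seg (b i) (d i)).V p →ₗ[K]
      (dsum (K := K) fun i => seg (b i) (d i)).V p)
    (hcomm : ∀ (p : ℤ) (v : ∀ k, (seg (K := K) (b k) (d' k)).V p) (k : Fin m),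
      canonMap (b k) (d' k) (b k) (d k) p (c k • v k)
        = psi p (fun j => canonMap (b j) (d' j) (b j) (d j) p (v j)) k) :
    ∀ (p : ℤ) (i j : Fin m) (v : (seg (K := K) (b i) (d i)).V p),
      (i ≠ j → psi p (Pi.single i v) j = 0) ∧ psi p (Pi.single i v) i = c i • v := by
  intro p i j v
  have hdiag := Pi.eq_smul_of_comp_surjective (fun k => canonMap (b k) (d' k) (b k) (d k) p)
    (fun k => canonMap_surjective (hdd' k) p) c (psi p) (hcomm p) (Pi.single i v)
  refine ⟨fun hij => (congrFun hdiag j).trans ?_, (congrFun hdiag i).trans ?_⟩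
  · rw [Pi.single_eq_of_ne' hij, smul_zero]
  · rw [Pi.single_eq_same]

/-- Propagation of nonzeros through the projection morphism
`π : V' = ⊕ I[b_i, d'_i] → V = ⊕ I[b_i, d_i]`: if `π ∘ φ = ψ ∘ π` with `φ` diagonal
with scalars `c_i`, then `ψ` is diagonal with the same scalars. -/
theorem stmt_8 (K : Type) [Field K] (m : ℕ) (b d d' : Fin m → ℤ) (c : Fin m → K)
    (hbd : ∀ i, b i ≤ d i)
    (hdd' : ∀ i, d i ≤ d' i)
    (hall : ∀ i j, d i ≤ d' j)
    (psi : ∀ p : ℤ, (dsum (K := K) fun i => seg (b i) (d i)).V p →ₗ[K]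
      (dsum (K := K) fun i => seg (b i) (d i)).V p)
    (hpsi : psi ∈ HomSpace (dsum fun i => seg (b i) (d i)) (dsum fun i => seg (b i) (d i)))
    (hcomm : ∀ (p : ℤ) (v : ∀ k, (seg (K := K) (b k) (d' k)).V p) (k : Fin m),
      canonMap (b k) (d' k) (b k) (d k) p (c k • v k)
        = psi p (fun j => canonMap (b j) (d' j) (b j) (d j) p (v j)) k) :
    ∀ (p : ℤ) (i j : Fin m) (v : (seg (K := K) (b i) (d i)).V p),
      (i ≠ j → psi p (Pi.single i v) j = 0) ∧ psi p (Pi.single i v) i = c i • v :=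
  stmt_8_general K m b d d' c hdd' psi hcomm
end

section
/- Consider representations T of the 'cross' bound quiver with vertices a, b, c, d, e and arrows α: b → e, β: e → d, γ: a → e, δ: e → c, subject to the relations β∘α = 0 and δ∘γ = 0. Every such representation T decomposes as T ≅ T_1 ⊕ T_2 where T_1(c) = 0 and T_2(a) = 0. In particular, no indecomposable representation of this bound quiver is nonzero at both a and c. -/
/-- Extend a subspace disjoint from `p` to a full complement of `p`. -/
theorem aux_extend {K V : Type} [Field K] [AddCommGroup V] [Module K V]
    (p q : Submodule K V) (hpq : p ⊓ q = ⊥) :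
    ∃ r, q ≤ r ∧ IsCompl p r := by
  obtain ⟨s, hs⟩ := Submodule.exists_isCompl (p ⊔ q)
  refine ⟨q ⊔ s, le_sup_left, ?_, ?_⟩
  · rw [disjoint_iff, eq_bot_iff]
    rintro x ⟨hxp, hxqs⟩
    obtain ⟨y, hy, z, hz, rfl⟩ := Submodule.mem_sup.mp hxqs
    have hz0 : z ∈ (p ⊔ q) ⊓ s := ⟨by
      have : z = (y + z) - y := (add_sub_cancel_left y z).symm
      rw [this]
      exact Submodule.sub_mem _ (Submodule.mem_sup_left hxp) (Submodule.mem_sup_right hy), hz⟩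
    rw [hs.disjoint.eq_bot] at hz0
    simp only [Submodule.mem_bot] at hz0
    subst hz0
    have : y + 0 ∈ p ⊓ q := ⟨hxp, by simpa using hy⟩
    rw [hpq] at this
    simpa using this
  · rw [codisjoint_iff, ← sup_assoc]
    exact hs.codisjoint.eq_top

/-- Inside a subspace `N`, extend `q ≤ N` (disjoint from `p`) to a complement of `p ⊓ N`. -/
theorem aux_extend_in {K V : Type} [Field K] [AddCommGroup V] [Module K V]
    (p q N : Submodule K V) (hqN : q ≤ N) (hpq : p ⊓ q = ⊥) :
    ∃ W, W ≤ N ∧ q ≤ W ∧ (p ⊓ N) ⊔ W = N ∧ (p ⊓ N) ⊓ W = ⊥ := by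
  have hinj : Function.Injective N.subtype := N.injective_subtype
  have hbot : (p ⊓ N).comap N.subtype ⊓ q.comap N.subtype = ⊥ := by
    rw [← Submodule.comap_inf]
    have h1 : p ⊓ N ⊓ q = ⊥ := by
      rw [inf_assoc, inf_eq_right.mpr hqN, hpq]
    rw [h1, Submodule.comap_bot, Submodule.ker_subtype]
  obtain ⟨r, hqr, hr⟩ := aux_extend ((p ⊓ N).comap N.subtype) (q.comap N.subtype) hbot
  refine ⟨r.map N.subtype, ?_, ?_, ?_, ?_⟩
  · exact Submodule.map_subtype_le N r
  · have : q = (q.comap N.subtype).map N.subtype := by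
      rw [Submodule.map_comap_subtype, inf_eq_right.mpr hqN]
    rw [this]
    exact Submodule.map_mono hqr
  · have h2 := congrArg (Submodule.map N.subtype) hr.codisjoint.eq_top
    rw [Submodule.map_sup, Submodule.map_comap_subtype, Submodule.map_subtype_top,
      inf_eq_right.mpr (inf_le_right : p ⊓ N ≤ N)] at h2
    exact h2
  · have h3 := congrArg (Submodule.map N.subtype) hr.disjoint.eq_bot
    rw [Submodule.map_inf _ hinj, Submodule.map_comap_subtype, Submodule.map_bot,
      inf_eq_right.mpr (inf_le_right : p ⊓ N ≤ N)] at h3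
    exact h3

/-- Every representation of the cross-shaped bound quiver
(`α : b → e`, `β : e → d`, `γ : a → e`, `δ : e → c` with `β∘α = 0`, `δ∘γ = 0`)
decomposes as `T ≅ T₁ ⊕ T₂` with `T₁(c) = 0` and `T₂(a) = 0`, expressed via
complementary invariant families of submodules. -/
theorem stmt_13 (K A B C D E : Type)
    [Field K] [AddCommGroup A] [Module K A] [AddCommGroup B] [Module K B]
    [AddCommGroup C] [Module K C] [AddCommGroup D] [Module K D]
    [AddCommGroup E] [Module K E]
    [FiniteDimensional K A] [FiniteDimensional K B] [FiniteDimensional K C]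
    [FiniteDimensional K D] [FiniteDimensional K E]
    (f : A →ₗ[K] E) (g : B →ₗ[K] E) (h : E →ₗ[K] C) (i : E →ₗ[K] D)
    (hhf : h.comp f = 0) (hig : i.comp g = 0) :
    ∃ (A₁ A₂ : Submodule K A) (B₁ B₂ : Submodule K B) (C₁ C₂ : Submodule K C)
      (D₁ D₂ : Submodule K D) (E₁ E₂ : Submodule K E),
      IsCompl A₁ A₂ ∧ IsCompl B₁ B₂ ∧ IsCompl C₁ C₂ ∧ IsCompl D₁ D₂ ∧ IsCompl E₁ E₂ ∧
      Submodule.map f A₁ ≤ E₁ ∧ Submodule.map g B₁ ≤ E₁ ∧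
      Submodule.map h E₁ ≤ C₁ ∧ Submodule.map i E₁ ≤ D₁ ∧
      Submodule.map f A₂ ≤ E₂ ∧ Submodule.map g B₂ ≤ E₂ ∧
      Submodule.map h E₂ ≤ C₂ ∧ Submodule.map i E₂ ≤ D₂ ∧
      C₁ = ⊥ ∧ A₂ = ⊥ := by
  set M := LinearMap.range f with hM
  have hMker : M ≤ LinearMap.ker h := LinearMap.range_le_ker_iff.mpr hhf
  set B₁ := M.comap g with hB₁
  obtain ⟨B₂, hB⟩ := Submodule.exists_isCompl B₁
  set G := B₂.map g with hG
  have hGker : G ≤ LinearMap.ker i := by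
    rintro x ⟨b, _, rfl⟩
    simp only [LinearMap.mem_ker]
    exact congrFun (congrArg DFunLike.coe hig) b
  have hMG : M ⊓ G = ⊥ := by
    rw [eq_bot_iff]
    rintro x ⟨hxM, hxG⟩
    obtain ⟨b, hb, rfl⟩ := hxG
    have : b ∈ B₁ ⊓ B₂ := ⟨hxM, hb⟩
    rw [hB.disjoint.eq_bot] at this
    simp only [Submodule.mem_bot] at this
    simp [this]
  obtain ⟨W, hWN, hGW, hWsup, hWinf⟩ := aux_extend_in M G (LinearMap.ker i) hGker hMG
  have hMW : M ⊓ W = ⊥ := by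
    rw [eq_bot_iff, ← hWinf]
    exact le_inf (le_inf inf_le_left (le_trans inf_le_right hWN)) inf_le_right
  obtain ⟨E₂, hWE₂, hE⟩ := aux_extend M W hMW
  have hiDisj : (Submodule.map i M) ⊓ (Submodule.map i E₂) = ⊥ := by
    rw [eq_bot_iff]
    rintro x ⟨hx1, hx2⟩
    obtain ⟨u, hu, rfl⟩ := hx1
    obtain ⟨w, hw, hwx⟩ := hx2
    have huwN : u - w ∈ LinearMap.ker i := by
      simp only [LinearMap.mem_ker, map_sub, hwx, sub_self]
    rw [← hWsup] at huwN
    obtain ⟨p, hp, v, hv, hpv⟩ := Submodule.mem_sup.mp huwN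
    have hkey : u - p ∈ M ⊓ E₂ := by
      refine ⟨Submodule.sub_mem _ hu hp.1, ?_⟩
      have : u - p = w + v := by
        have h4 : u - w = p + v := hpv.symm
        linear_combination (norm := abel) h4
      rw [this]
      exact Submodule.add_mem _ hw (hWE₂ hv)
    rw [hE.disjoint.eq_bot] at hkey
    simp only [Submodule.mem_bot, sub_eq_zero] at hkey
    have : i u = 0 := by rw [hkey]; exact hp.2
    simp [this]
  obtain ⟨D₂, hD₂le, hD⟩ := aux_extend (Submodule.map i M) (Submodule.map i E₂) hiDisj
  refine ⟨⊤, ⊥, B₁, B₂, ⊥, ⊤, Submodule.map i M, D₂, M, E₂,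
    isCompl_top_bot, hB, isCompl_bot_top, hD, hE, ?_, ?_, ?_, le_refl _, ?_, ?_, le_top, hD₂le, rfl, rfl⟩
  · rw [Submodule.map_top]
  · exact Submodule.map_comap_le g M
  · rw [Submodule.map_le_iff_le_comap, Submodule.comap_bot]
    exact hMker
  · simp
  · exact le_trans (le_trans (le_of_eq hG.symm) hGW) hWE₂
end

section
/- There exists an indecomposable representation of the commutative 4×4 grid whose support has exactly 11 vertices and contains a hole. Specifically, the representation M with rows (from bottom): row 0: 0, 0, K, K; row 1: K, K, K², K; row 2: K, 0, K, 0; row 3: K, K, K, 0; with maps: row 1 maps K → K² given by (1,0)ᵗ and K² → K given by (1 0); vertical maps K² → K at column 2 given by (0 1), K → K² at column 2 row 0→1 given by (1,1)ᵗ, the map from M(row 2, col 0) up to row 3 being 0 and the map along row 3 from column 0 to column 1 being the identity, all other maps between copies of K being identities where both spaces are nonzero, has End(M) ≅ K and hence is indecomposable. -/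
lemma scalar_eq {K : Type} [Field K] (f : K →ₗ[K] K) : f = (f 1) • LinearMap.id := by
  ext; simp [smul_eq_mul, mul_comm]

lemma scalar_apply {K : Type} [Field K] (f : K →ₗ[K] K) (v : K) : f v = f 1 * v := by
  conv_lhs => rw [scalar_eq f]
  simp [smul_eq_mul]


/-- The 11-vertex representation `M` of the commutative 4×4 grid from
Theorem 5.2 of the paper (rows from bottom: `0,0,K,K`; `K,K,K²,K`; `K,0,K,0`; `K,K,K,0`;
with the displayed maps) has `End(M) ≅ K`: every endomorphism, given by its components at
the 11 nonzero vertices (identified here by their commutation with the structure maps of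
each edge between nonzero vertices), is a common scalar multiple of the identity. -/
theorem stmt_16 (K : Type) [Field K]
    (a02 a03 p10 q11 s13 t20 u22 x30 y31 z32 : K →ₗ[K] K)
    (r12 : K × K →ₗ[K] K × K)
    -- edge (row 0, col 2) → (row 0, col 3), identity:
    (h1 : a03 = a02)
    -- edge (row 1, col 0) → (row 1, col 1), identity:
    (h2 : q11 = p10)
    -- edge (row 1, col 1) → (row 1, col 2), the map `v ↦ (v, 0)`:
    (h3 : r12.comp (LinearMap.inl K K K) = (LinearMap.inl K K K).comp q11)
    -- edge (row 1, col 2) → (row 1, col 3), the map `(x, y) ↦ x`: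
    (h4 : s13.comp (LinearMap.fst K K K) = (LinearMap.fst K K K).comp r12)
    -- edge (row 3, col 0) → (row 3, col 1), identity:
    (h5 : y31 = x30)
    -- edge (row 3, col 1) → (row 3, col 2), identity:
    (h6 : z32 = y31)
    -- edge (row 1, col 0) → (row 2, col 0), identity (the map (2,0)→(3,0) is 0):
    (h7 : t20 = p10)
    -- edge (row 0, col 2) → (row 1, col 2), the map `v ↦ (v, v)`:
    (h9 : r12.comp ((LinearMap.id (R := K) (M := K)).prod LinearMap.id)
        = ((LinearMap.id (R := K) (M := K)).prod LinearMap.id).comp a02)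
    -- edge (row 1, col 2) → (row 2, col 2), the map `(x, y) ↦ y`:
    (h10 : u22.comp (LinearMap.snd K K K) = (LinearMap.snd K K K).comp r12)
    -- edge (row 2, col 2) → (row 3, col 2), identity:
    (h11 : z32 = u22)
    -- edge (row 0, col 3) → (row 1, col 3), identity:
    (h12 : s13 = a03) :
    ∃ cst : K, a02 = cst • LinearMap.id ∧ a03 = cst • LinearMap.id ∧
      p10 = cst • LinearMap.id ∧ q11 = cst • LinearMap.id ∧
      r12 = cst • LinearMap.id ∧ s13 = cst • LinearMap.id ∧
      t20 = cst • LinearMap.id ∧ u22 = cst • LinearMap.id ∧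
      x30 = cst • LinearMap.id ∧ y31 = cst • LinearMap.id ∧
      z32 = cst • LinearMap.id := by
  set c := a02 1 with hc
  have hs13 : s13 = a02 := by rw [h12, h1]
  have hq : q11 = s13 := by
    ext
    have h3v := LinearMap.congr_fun h3 (1 : K)
    have h4v := LinearMap.congr_fun h4 ((1 : K), (0 : K))
    simp at h3v h4v
    rw [h4v, h3v]
  have hu : ∀ v : K, u22 v = a02 v := by
    intro v
    have h9v := LinearMap.congr_fun h9 v
    have h10v := LinearMap.congr_fun h10 ((v : K), (v : K))
    simp at h9v h10v
    rw [h10v, h9v]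
  have hu' : u22 = a02 := LinearMap.ext hu
  have hr : r12 = c • LinearMap.id := by
    apply LinearMap.ext
    rintro ⟨x, y⟩
    apply Prod.ext
    · have h4v := LinearMap.congr_fun h4 ((x : K), (y : K))
      simp at h4v ⊢
      rw [← h4v, hs13, scalar_apply a02]
    · have h10v := LinearMap.congr_fun h10 ((x : K), (y : K))
      simp at h10v ⊢
      rw [← h10v, hu y, scalar_apply a02]
  have ha : a02 = c • LinearMap.id := scalar_eq a02
  have hx : x30 = a02 := by rw [← h5, ← h6, h11, hu']
  refine ⟨c, ha, ?_, ?_, ?_, hr, ?_, ?_, ?_, ?_, ?_, ?_⟩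
  · rw [h1]; exact ha
  · rw [← h2, hq, hs13]; exact ha
  · rw [hq, hs13]; exact ha
  · rw [hs13]; exact ha
  · rw [h7, ← h2, hq, hs13]; exact ha
  · rw [hu']; exact ha
  · rw [hx]; exact ha
  · rw [h5, hx]; exact ha
  · rw [h6, h5, hx]; exact ha
end

section
/- Let V = ⊕_{i=1}^m I[b'_i, d'_i] be a representation of A_w with all d'_i distinct, common midpoint (b'_i + d'_i = 2μ for all i), and let I_V = I[max_i b'_i, max_j d'_j]. Then for every i there is a nonzero morphism I_V → I[b'_i, d'_i], and the morphism η: I_V → V with all components equal to these canonical nonzero morphisms has the property: for any endomorphism φ of V with diagonal matrix form having scalar entries c_1, ..., c_m and any endomorphism ψ of I_V (a scalar λ) satisfying φ ∘ η = η ∘ ψ, one has c_1 = c_2 = ... = c_m = λ. -/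
open scoped Classical

variable {K : Type} [Field K] {P : Type} [Preorder P]

/-! Every interval `I[b'_i, d'_i]` contains the point `Bmax`: the common midpoint forces
`d'_i ≥ d'_j ≥ b'_j = Bmax`. At `Bmax` both `I_V` and each summand are `K` and the canonical
maps are the identity, so evaluating `φ ∘ η = η ∘ ψ` there on a nonzero vector gives
`c_i = λ` for every `i`. -/

theorem canonMap_apply_val {a b c d p : P} (hp : c ≤ p ∧ p ≤ d) (v : (seg (K := K) a b).V p) :
    (canonMap a b c d p v).1 = v.1 := if_pos hp

theorem canonMap_mem_homSpace {a b c d : P} (hca : c ≤ a) (hdb : d ≤ b) :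
    (fun p => canonMap (K := K) a b c d p) ∈ HomSpace (seg a b) (seg c d) := by
  intro p q hpq
  refine LinearMap.ext fun v => Subtype.ext ?_
  change (if c ≤ p ∧ q ≤ d then (if c ≤ p ∧ p ≤ d then v.1 else 0) else 0)
    = if c ≤ q ∧ q ≤ d then (if a ≤ p ∧ q ≤ b then v.1 else 0) else 0
  by_cases hv : a ≤ p ∧ p ≤ b
  · by_cases h1 : c ≤ p ∧ q ≤ d
    · have hp : c ≤ p ∧ p ≤ d := ⟨h1.1, hpq.trans h1.2⟩
      have hq : c ≤ q ∧ q ≤ d := ⟨h1.1.trans hpq, h1.2⟩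
      have hpq' : a ≤ p ∧ q ≤ b := ⟨hv.1, h1.2.trans hdb⟩
      rw [if_pos h1, if_pos hp, if_pos hq, if_pos hpq']
    · rw [if_neg h1]
      split_ifs with h2 h3 <;> first | rfl | exact absurd ⟨hca.trans h3.1, h2.2⟩ h1
  · simp [seg_val_zero hv v]

theorem exists_canonMap_apply_ne_zero {a b c d p : P} (hab : a ≤ p ∧ p ≤ b)
    (hcd : c ≤ p ∧ p ≤ d) : ∃ v : (seg (K := K) a b).V p, canonMap a b c d p v ≠ 0 := by
  refine ⟨⟨1, by rw [if_pos hab]; trivial⟩, fun h => one_ne_zero (α := K) ?_⟩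
  exact (canonMap_apply_val hcd _).symm.trans (congrArg Subtype.val h)

theorem canonMap_ne_zero {a b c d p : P} (hab : a ≤ p ∧ p ≤ b) (hcd : c ≤ p ∧ p ≤ d) :
    (fun q => canonMap (K := K) a b c d q) ≠ 0 := fun h => by
  obtain ⟨v, hv⟩ := exists_canonMap_apply_ne_zero (K := K) hab hcd
  exact hv (LinearMap.congr_fun (congrFun h p) v)

theorem stmt_17_general (K : Type) [Field K] (m : ℕ)
    (b' d' : Fin m → ℤ) (mu2 Bmax Dmax : ℤ)
    (hbd : ∀ i, b' i ≤ d' i)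
    (hvert : ∀ i, b' i + d' i = mu2)
    (hB : ∀ i, b' i ≤ Bmax) (hBmem : ∃ i, b' i = Bmax)
    (hD : ∀ i, d' i ≤ Dmax) :
    (∀ i, (fun p => canonMap (K := K) Bmax Dmax (b' i) (d' i) p)
        ∈ HomSpace (seg Bmax Dmax) (seg (b' i) (d' i)) ∧
      (fun p => canonMap (K := K) Bmax Dmax (b' i) (d' i) p) ≠ 0) ∧
    ∀ (c : Fin m → K)
      (phi : ∀ p : ℤ, (dsum (K := K) fun i => seg (b' i) (d' i)).V p →ₗ[K]
        (dsum (K := K) fun i => seg (b' i) (d' i)).V p),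
      phi ∈ HomSpace (dsum fun i => seg (b' i) (d' i)) (dsum fun i => seg (b' i) (d' i)) →
      (∀ (p : ℤ) (v : ∀ k, (seg (K := K) (b' k) (d' k)).V p) (k : Fin m),
        phi p v k = c k • v k) →
      ∀ lam : K,
        (∀ (p : ℤ) (v : (seg (K := K) Bmax Dmax).V p),
          phi p (fun k => canonMap Bmax Dmax (b' k) (d' k) p v)
            = fun k => canonMap Bmax Dmax (b' k) (d' k) p (lam • v)) →
        ∀ i, c i = lam := by
  obtain ⟨j, hj⟩ := hBmem
  have hBd : ∀ i, Bmax ≤ d' i := fun i => by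
    have := hvert i; have := hvert j; have := hB i; have := hbd j; omega
  have hBmax_mem : ∀ i, b' i ≤ Bmax ∧ Bmax ≤ d' i := fun i => ⟨hB i, hBd i⟩
  have hBmax_IV : Bmax ≤ Bmax ∧ Bmax ≤ Dmax := ⟨le_rfl, (hBd j).trans (hD j)⟩
  refine ⟨fun i => ⟨canonMap_mem_homSpace (hB i) (hD i),
    canonMap_ne_zero hBmax_IV (hBmax_mem i)⟩, ?_⟩
  intro c phi _ hdiag lam hcomm i
  obtain ⟨v, hv⟩ := exists_canonMap_apply_ne_zero (K := K) hBmax_IV (hBmax_mem i)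
  have hscalar := congrFun (hcomm Bmax v) i
  rw [hdiag, map_smul] at hscalar
  exact smul_left_injective K hv hscalar

/-- Coning: with `I_V = I[max b'_i, max d'_j]` over a vertical family,
each canonical morphism `I_V → I[b'_i, d'_i]` is a nonzero morphism, and if a diagonal
endomorphism `φ` (scalars `c_i`) of `⊕ I[b'_i,d'_i]` intertwines the coning morphism with
the scalar `λ` on `I_V`, then `c_1 = ... = c_m = λ`. -/
theorem stmt_17 (K : Type) [Field K] (m : ℕ) (hm : 0 < m)
    (b' d' : Fin m → ℤ) (mu2 Bmax Dmax : ℤ)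
    (hbd : ∀ i, b' i ≤ d' i)
    (hinj : Function.Injective d')
    (hvert : ∀ i, b' i + d' i = mu2)
    (hB : ∀ i, b' i ≤ Bmax) (hBmem : ∃ i, b' i = Bmax)
    (hD : ∀ i, d' i ≤ Dmax) (hDmem : ∃ i, d' i = Dmax) :
    (∀ i, (fun p => canonMap (K := K) Bmax Dmax (b' i) (d' i) p)
        ∈ HomSpace (seg Bmax Dmax) (seg (b' i) (d' i)) ∧
      (fun p => canonMap (K := K) Bmax Dmax (b' i) (d' i) p) ≠ 0) ∧
    ∀ (c : Fin m → K)
      (phi : ∀ p : ℤ, (dsum (K := K) fun i => seg (b' i) (d' i)).V p →ₗ[K]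
        (dsum (K := K) fun i => seg (b' i) (d' i)).V p),
      phi ∈ HomSpace (dsum fun i => seg (b' i) (d' i)) (dsum fun i => seg (b' i) (d' i)) →
      (∀ (p : ℤ) (v : ∀ k, (seg (K := K) (b' k) (d' k)).V p) (k : Fin m),
        phi p v k = c k • v k) →
      ∀ lam : K,
        (∀ (p : ℤ) (v : (seg (K := K) Bmax Dmax).V p),
          phi p (fun k => canonMap Bmax Dmax (b' k) (d' k) p v)
            = fun k => canonMap Bmax Dmax (b' k) (d' k) p (lam • v)) →
        ∀ i, c i = lam :=
  stmt_17_general K m b' d' mu2 Bmax Dmax hbd hvert hB hBmem hD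
end

section
/- Let b⃗_1,...,b⃗_m and d⃗_1,...,d⃗_m in ℤⁿ satisfy b⃗_i ≤ d⃗_i componentwise. Then there exist d⃗'_1,...,d⃗'_m in ℤⁿ, pairwise distinct, with d⃗'_i ≥ d⃗_i for all i and b⃗_j + d⃗'_j ≤ 2·d⃗'_i (componentwise) for all pairs i, j. -/
open scoped Classical

variable {K : Type} [Field K] {P : Type} [Preorder P]

/-- Separate-and-shift in `ℤⁿ`: there exist pairwise distinct
`d'_i ≥ d_i` with `b_j + d'_j ≤ 2 d'_i` componentwise for all pairs. -/
theorem stmt_18 (n m : ℕ) (hn : 0 < n) (b d : Fin m → (Fin n → ℤ))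
    (hbd : ∀ i, b i ≤ d i) :
    ∃ d' : Fin m → (Fin n → ℤ), Function.Injective d' ∧ (∀ i, d i ≤ d' i) ∧
      ∀ i j t, b j t + d' j t ≤ 2 * d' i t := by

  classical
  set N : ℤ := (m : ℤ) + ((Finset.univ : Finset (Fin m × Fin n)).sup
    fun p => (d p.1 p.2).toNat ⊔ (b p.1 p.2).toNat : ℕ) with hN
  have hsup : ∀ i t, (d i t : ℤ) ≤ N - m ∧ (b i t : ℤ) ≤ N - m := by
    intro i t
    have h1 : (d i t).toNat ⊔ (b i t).toNat ≤ ((Finset.univ : Finset (Fin m × Fin n)).sup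
        fun p => (d p.1 p.2).toNat ⊔ (b p.1 p.2).toNat : ℕ) :=
      Finset.le_sup (f := fun p : Fin m × Fin n => (d p.1 p.2).toNat ⊔ (b p.1 p.2).toNat)
        (Finset.mem_univ (i, t))
    constructor
    · calc (d i t : ℤ) ≤ ((d i t).toNat : ℤ) := Int.self_le_toNat _
        _ ≤ ((d i t).toNat ⊔ (b i t).toNat : ℕ) := by exact_mod_cast le_sup_left
        _ ≤ N - m := by rw [hN]; push_cast; omega
    · calc (b i t : ℤ) ≤ ((b i t).toNat : ℤ) := Int.self_le_toNat _
        _ ≤ ((d i t).toNat ⊔ (b i t).toNat : ℕ) := by exact_mod_cast le_sup_right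
        _ ≤ N - m := by rw [hN]; push_cast; omega
  refine ⟨fun i t => N + if t = ⟨0, hn⟩ then (i : ℤ) else 0, ?_, ?_, ?_⟩
  · intro i j hij
    have := congrFun hij ⟨0, hn⟩
    simp only [if_pos rfl, if_true] at this
    have h2 : ((i : ℤ)) = ((j : ℤ)) := by omega
    exact Fin.ext (by exact_mod_cast h2)
  · intro i t
    have h1 := (hsup i t).1
    have hi : (i : ℤ) < m := by exact_mod_cast i.isLt
    by_cases ht : t = ⟨0, hn⟩
    · subst ht; simp only [if_pos rfl]; omega
    · simp only [if_neg ht]; omega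
  · intro i j t
    have hb := (hsup j t).2
    have hji : (j : ℤ) ≤ m := le_of_lt (by exact_mod_cast j.isLt)
    have hi0 : (0 : ℤ) ≤ (i : ℤ) := Int.ofNat_nonneg _
    by_cases ht : t = ⟨0, hn⟩
    · subst ht
      have hb' := (hsup j ⟨0, hn⟩).2
      simp only [if_pos rfl]; omega
    · simp only [if_neg ht]; omega
end
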